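/- Let m ∈ ℕ₀ and n ∈ ℤ with |n| ≤ m, and let P_n^{-m}(z,w) = (-1)^n ∑_{k} binom(m,k+|n|)binom(m,k) z^{k + max(-n,0)} w^{k + max(n,0)} (1-zw)^{-m}. Then D⁺ P_n^{-m} = (-m - n - 1) P_{n+1}^{-m} and D⁻ P_n^{-m} = (-m + n - 1) P_{n-1}^{-m} on {(z,w) ∈ ℂ² : zw ≠ 1}, where D⁺ = ∂_z - w²∂_w and D⁻ = ∂_w - z²∂_z. -/

import Mathlib

/-!
Write `P_n^{-m} = (-1)ⁿ Q_n (1 - z w)⁻ᵐ` with the polynomial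
`Q_n = ∑ₖ C(m, k+|n|) C(m, k) z^(k + max(-n, 0)) w^(k + max(n, 0))`. Since `D⁺` is a derivation
with `D⁺ (1 - z w)⁻ᵐ = m w (1 - z w)⁻ᵐ`, the raising identity reduces to
`D⁺ Q_n + m w Q_n = (m + n + 1) Q_{n+1}`, a coefficient comparison based on
`(k + 1) C(m, k+1) = (m - k) C(m, k)` after shifting one of the sums by one index (both boundary
terms vanish). The lowering identity is the raising one after swapping `z ↔ w`, which exchanges
`D⁺` and `D⁻` and sends `P_n` to `P_{-n}`.
-/

open Complex

/-- Exceptional Poisson Fourier mode `P_n^{-m}` (the defining sum is finite since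
`Nat.choose m j = 0` for `j > m`; it vanishes identically when `|n| > m`). -/
noncomputable def PFM (m : ℕ) (n : ℤ) (z w : ℂ) : ℂ :=
  (-1 : ℂ) ^ n * (∑' k : ℕ,
      (Nat.choose m (k + n.natAbs) : ℂ) * (Nat.choose m k : ℂ) *
        z ^ (k + (max (-n) 0).toNat) * w ^ (k + (max n 0).toNat)) / (1 - z * w) ^ m

open Finset

theorem Nat.cast_succ_mul_choose_succ {R : Type*} [CommRing R] (m k : ℕ) :
    ((k : R) + 1) * (m.choose (k + 1) : R) = ((m : R) - k) * (m.choose k : R) := by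
  rcases lt_or_ge k m with hkm | hmk
  · have h := congrArg (Nat.cast : ℕ → R) (Nat.choose_succ_right_eq m k)
    push_cast [Nat.cast_sub hkm.le] at h
    linear_combination h
  · rcases hmk.eq_or_lt with rfl | hmk
    · simp
    · simp [Nat.choose_eq_zero_of_lt hmk, Nat.choose_eq_zero_of_lt (hmk.trans k.lt_succ_self)]

theorem Finset.sum_range_succ_shift {M : Type*} [AddCommMonoid M] (m : ℕ) (f : ℕ → M)
    (h0 : f 0 = 0) (hm : f (m + 1) = 0) :
    ∑ k ∈ range (m + 1), f (k + 1) = ∑ k ∈ range (m + 1), f k := by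
  rw [sum_range_succ' f m, sum_range_succ (fun k => f (k + 1)) m, h0, hm]

theorem sq_mul_natCast_mul_pow_sub_one {R : Type*} [CommSemiring R] (w : R) (e : ℕ) :
    w ^ 2 * ((e : R) * w ^ (e - 1)) = (e : R) * w ^ (e + 1) := by
  cases e with
  | zero => simp
  | succ e => rw [Nat.add_sub_cancel]; ring

noncomputable def dPlus (f : ℂ → ℂ → ℂ) (z w : ℂ) : ℂ :=
  deriv (fun z' => f z' w) z - w ^ 2 * deriv (fun w' => f z w') w

theorem dPlus_div_one_sub_mul_pow {f : ℂ → ℂ → ℂ} {fz fw z w : ℂ} (m : ℕ) (hzw : z * w ≠ 1)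
    (hz : HasDerivAt (fun z' => f z' w) fz z) (hw : HasDerivAt (fun w' => f z w') fw w) :
    dPlus (fun z w => f z w / (1 - z * w) ^ m) z w
      = (fz - w ^ 2 * fw + m * w * f z w) / (1 - z * w) ^ m := by
  have hu : (1 : ℂ) - z * w ≠ 0 := sub_ne_zero.mpr hzw.symm
  have hdz : HasDerivAt (fun z' => f z' w / (1 - z' * w) ^ m)
      ((fz * (1 - z * w) ^ m - f z w * (m * (1 - z * w) ^ (m - 1) * -(1 * w)))
        / ((1 - z * w) ^ m) ^ 2) z :=
    hz.div ((((hasDerivAt_id z).mul_const w).const_sub 1).pow m) (pow_ne_zero m hu)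
  have hdw : HasDerivAt (fun w' => f z w' / (1 - z * w') ^ m)
      ((fw * (1 - z * w) ^ m - f z w * (m * (1 - z * w) ^ (m - 1) * -(z * 1)))
        / ((1 - z * w) ^ m) ^ 2) w :=
    hw.div ((((hasDerivAt_id w).const_mul z).const_sub 1).pow m) (pow_ne_zero m hu)
  rw [dPlus, hdz.deriv, hdw.deriv]
  cases m with
  | zero => simp
  | succ m =>
    rw [Nat.add_sub_cancel]
    field_simp
    ring

noncomputable def modeNumerator (m a b : ℕ) (z w : ℂ) : ℂ :=
  ∑ k ∈ range (m + 1), (m.choose (k + a + b) : ℂ) * m.choose k * z ^ (k + a) * w ^ (k + b)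

noncomputable def modeNumeratorDerivZ (m a b : ℕ) (z w : ℂ) : ℂ :=
  ∑ k ∈ range (m + 1),
    (m.choose (k + a + b) : ℂ) * m.choose k * (((k + a : ℕ) : ℂ) * z ^ (k + a - 1)) * w ^ (k + b)

noncomputable def modeNumeratorDerivW (m a b : ℕ) (z w : ℂ) : ℂ :=
  ∑ k ∈ range (m + 1),
    (m.choose (k + a + b) : ℂ) * m.choose k * z ^ (k + a) * (((k + b : ℕ) : ℂ) * w ^ (k + b - 1))

theorem hasDerivAt_modeNumerator_z (m a b : ℕ) (z w : ℂ) :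
    HasDerivAt (fun z' => modeNumerator m a b z' w) (modeNumeratorDerivZ m a b z w) z :=
  HasDerivAt.fun_sum fun k _ => ((hasDerivAt_pow (k + a) z).const_mul _).mul_const _

theorem hasDerivAt_modeNumerator_w (m a b : ℕ) (z w : ℂ) :
    HasDerivAt (fun w' => modeNumerator m a b z w') (modeNumeratorDerivW m a b z w) w :=
  HasDerivAt.fun_sum fun k _ => (hasDerivAt_pow (k + b) w).const_mul _

theorem modeNumerator_raise_nonneg (m b : ℕ) (z w : ℂ) :
    modeNumeratorDerivZ m 0 b z w - w ^ 2 * modeNumeratorDerivW m 0 b z w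
        + m * w * modeNumerator m 0 b z w
      = (m + b + 1) * modeNumerator m 0 (b + 1) z w := by
  set g : ℕ → ℂ := fun k => k * m.choose k * m.choose (k + b) * z ^ (k - 1) * w ^ (k + b)
  have hshift := sum_range_succ_shift m g (by simp [g]) (by simp [g])
  calc _ = ∑ k ∈ range (m + 1), (g k
          + (k + b + 1) * m.choose (k + b + 1) * m.choose k * z ^ k * w ^ (k + b + 1)) := by
        simp only [modeNumerator, modeNumeratorDerivZ, modeNumeratorDerivW, mul_sum,
          ← sum_sub_distrib, ← sum_add_distrib]
        refine sum_congr rfl fun k _ => ?_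
        have hc := Nat.cast_succ_mul_choose_succ (R := ℂ) m (k + b)
        have hw := sq_mul_natCast_mul_pow_sub_one w (k + b)
        simp only [g, add_zero]
        push_cast at hc hw ⊢
        linear_combination -(m.choose k * z ^ k * w ^ (k + b + 1) : ℂ) * hc
          - (m.choose (k + b) * m.choose k * z ^ k : ℂ) * hw
    _ = ∑ k ∈ range (m + 1), (g (k + 1)
          + (k + b + 1) * m.choose (k + b + 1) * m.choose k * z ^ k * w ^ (k + b + 1)) := by
        rw [sum_add_distrib, sum_add_distrib, hshift]
    _ = _ := by
        rw [modeNumerator, mul_sum]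
        refine sum_congr rfl fun k _ => ?_
        have hc := Nat.cast_succ_mul_choose_succ (R := ℂ) m k
        simp only [g, add_zero, Nat.add_sub_cancel]
        push_cast
        rw [show k + 1 + b = k + (b + 1) by omega]
        linear_combination (m.choose (k + (b + 1)) * z ^ k * w ^ (k + (b + 1)) : ℂ) * hc

theorem modeNumerator_raise_neg (m a : ℕ) (z w : ℂ) :
    modeNumeratorDerivZ m (a + 1) 0 z w - w ^ 2 * modeNumeratorDerivW m (a + 1) 0 z w
        + m * w * modeNumerator m (a + 1) 0 z w
      = (m - a) * modeNumerator m a 0 z w := by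
  set g : ℕ → ℂ := fun k => k * m.choose k * m.choose (k + a) * z ^ (k + a) * w ^ k
  have hshift := sum_range_succ_shift m g (by simp [g]) (by simp [g])
  calc _ = ∑ k ∈ range (m + 1),
          ((m - k - a) * m.choose (k + a) * m.choose k * z ^ (k + a) * w ^ k + g (k + 1)) := by
        simp only [modeNumerator, modeNumeratorDerivZ, modeNumeratorDerivW, mul_sum,
          ← sum_sub_distrib, ← sum_add_distrib]
        refine sum_congr rfl fun k _ => ?_
        have hca := Nat.cast_succ_mul_choose_succ (R := ℂ) m (k + a)
        have hck := Nat.cast_succ_mul_choose_succ (R := ℂ) m k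
        have hw := sq_mul_natCast_mul_pow_sub_one w k
        simp only [g, add_zero]
        rw [show k + (a + 1) - 1 = k + a by omega, show k + 1 + a = k + a + 1 by omega,
          ← add_assoc]
        push_cast at hca hck hw ⊢
        linear_combination (m.choose k * z ^ (k + a) * w ^ k : ℂ) * hca
          - (m.choose (k + a + 1) * z ^ (k + a + 1) * w ^ (k + 1) : ℂ) * hck
          - (m.choose (k + a + 1) * m.choose k * z ^ (k + a + 1) : ℂ) * hw
    _ = ∑ k ∈ range (m + 1),
          ((m - k - a) * m.choose (k + a) * m.choose k * z ^ (k + a) * w ^ k + g k) := by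
        rw [sum_add_distrib, sum_add_distrib, hshift]
    _ = _ := by
        rw [modeNumerator, mul_sum]
        refine sum_congr rfl fun k _ => ?_
        simp only [g, add_zero]
        ring

theorem modeNumerator_raise (m : ℕ) (n : ℤ) (z w : ℂ) :
    modeNumeratorDerivZ m (max (-n) 0).toNat (max n 0).toNat z w
        - w ^ 2 * modeNumeratorDerivW m (max (-n) 0).toNat (max n 0).toNat z w
        + m * w * modeNumerator m (max (-n) 0).toNat (max n 0).toNat z w
      = (m + n + 1) * modeNumerator m (max (-(n + 1)) 0).toNat (max (n + 1) 0).toNat z w := by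
  cases n with
  | ofNat b =>
    rw [Int.ofNat_eq_natCast, show (max (-(b : ℤ)) 0).toNat = 0 by omega,
      show (max (b : ℤ) 0).toNat = b by omega, show (max (-((b : ℤ) + 1)) 0).toNat = 0 by omega,
      show (max ((b : ℤ) + 1) 0).toNat = b + 1 by omega, modeNumerator_raise_nonneg]
    simp
  | negSucc a =>
    rw [show (max (-(Int.negSucc a)) 0).toNat = a + 1 by omega,
      show (max (Int.negSucc a) 0).toNat = 0 by omega,
      show (max (-(Int.negSucc a + 1)) 0).toNat = a by omega,
      show (max (Int.negSucc a + 1) 0).toNat = 0 by omega, modeNumerator_raise_neg]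
    push_cast
    ring

theorem PFM_eq (m : ℕ) (n : ℤ) (z w : ℂ) :
    PFM m n z w
      = (-1) ^ n * modeNumerator m (max (-n) 0).toNat (max n 0).toNat z w / (1 - z * w) ^ m := by
  rw [PFM, modeNumerator, tsum_eq_sum (s := range (m + 1)) fun k hk => by
    simp [Nat.choose_eq_zero_of_lt (show m < k by simpa using hk)]]
  congr 3 with k
  rw [show k + n.natAbs = k + (max (-n) 0).toNat + (max n 0).toNat by omega]

theorem PFM_swap (m : ℕ) (n : ℤ) : (fun w z => PFM m n z w) = PFM m (-n) := by
  ext w z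
  simp only [PFM, Int.natAbs_neg, neg_neg, ← inv_zpow', inv_neg_one, mul_comm w z]
  congr 3 with k
  ring

theorem dPlus_PFM (m : ℕ) (n : ℤ) {z w : ℂ} (hzw : z * w ≠ 1) :
    dPlus (PFM m n) z w = (-(m : ℂ) - n - 1) * PFM m (n + 1) z w := by
  rw [show PFM m n = _ from funext₂ (PFM_eq m n),
    dPlus_div_one_sub_mul_pow m hzw ((hasDerivAt_modeNumerator_z ..).const_mul _)
      ((hasDerivAt_modeNumerator_w ..).const_mul _), PFM_eq, zpow_add_one₀ (by norm_num)]
  linear_combination ((-1) ^ n / (1 - z * w) ^ m : ℂ) * modeNumerator_raise m n z w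

theorem dPlus_swap_PFM (m : ℕ) (n : ℤ) {z w : ℂ} (hzw : z * w ≠ 1) :
    dPlus (fun w z => PFM m n z w) w z = (-(m : ℂ) + n - 1) * PFM m (n - 1) z w := by
  rw [PFM_swap, dPlus_PFM m (-n) (by rwa [mul_comm]), show -n + 1 = -(n - 1) by ring,
    ← PFM_swap]
  push_cast
  ring

theorem stmt13_general (m : ℕ) (n : ℤ) :
    ∀ z w : ℂ, z * w ≠ 1 →
      (deriv (fun z' => PFM m n z' w) z - w ^ 2 * deriv (fun w' => PFM m n z w') w
          = (-(m : ℂ) - (n : ℂ) - 1) * PFM m (n + 1) z w)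
      ∧ (deriv (fun w' => PFM m n z w') w - z ^ 2 * deriv (fun z' => PFM m n z' w) z
          = (-(m : ℂ) + (n : ℂ) - 1) * PFM m (n - 1) z w) :=
  fun _ _ hzw => ⟨dPlus_PFM m n hzw, dPlus_swap_PFM m n hzw⟩

/-- Shift identities: `D⁺ P_n^{-m} = (-m-n-1) P_{n+1}^{-m}` and
`D⁻ P_n^{-m} = (-m+n-1) P_{n-1}^{-m}` on `{zw ≠ 1}`, where `D⁺ = ∂_z - w²∂_w`
and `D⁻ = ∂_w - z²∂_z`. -/
theorem stmt13 (m : ℕ) (n : ℤ) (hn : n.natAbs ≤ m) :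
    ∀ z w : ℂ, z * w ≠ 1 →
      (deriv (fun z' => PFM m n z' w) z - w ^ 2 * deriv (fun w' => PFM m n z w') w
          = (-(m : ℂ) - (n : ℂ) - 1) * PFM m (n + 1) z w)
      ∧ (deriv (fun w' => PFM m n z w') w - z ^ 2 * deriv (fun z' => PFM m n z' w) z
          = (-(m : ℂ) + (n : ℂ) - 1) * PFM m (n - 1) z w) :=
  stmt13_general m n
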